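/- Lemma (eigenvector of M_3). Let ℓ, c, r_x, β > 0 and γ ∈ (0,1) with c·r_x < 1, ℓ·c·γ + c·r_x < 1 and (A_3 + B_3·β)² ≥ 4·ℓ·c·β·γ. Define v_1 := 2·c·r_x/(A_3 − B_3·β + √((A_3 − B_3·β)² + 4·c·r_x·β·(1 − A_3))). Then the vector (v_1, 1)ᵀ is an eigenvector of M_3 associated with the eigenvalue λ_3, i.e., M_3·(v_1, 1)ᵀ = λ_3·(v_1, 1)ᵀ. Moreover, for fixed ℓ, c, r_x, γ there exist constants K > 0 and β_0 > 0 such that |v_1 − r_x/(r_x + γℓ)| ≤ K·β for all β ∈ (0, β_0]. -/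

import Mathlib

noncomputable section

/-- `A₃ = ℓcγ + c r_x`. -/
def A3 (l c rx γ : ℝ) : ℝ := l * c * γ + c * rx

/-- `B₃ = 1 − c r_x`. -/
def B3 (c rx : ℝ) : ℝ := 1 - c * rx

/-- `λ₃ = −(A₃ + B₃β)/2 + (1/2)·√((A₃ + B₃β)² − 4ℓcβγ)`. -/
def lam3 (l c rx γ β : ℝ) : ℝ :=
  -(A3 l c rx γ + B3 c rx * β) / 2 +
    Real.sqrt ((A3 l c rx γ + B3 c rx * β) ^ 2 - 4 * l * c * β * γ) / 2

/-- The matrix `M₃` of the frozen-dual recursion. -/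
def M3 (l c rx γ β : ℝ) : Matrix (Fin 2) (Fin 2) ℝ :=
  !![-(l * c * γ) - c * rx, c * rx;
     β * (1 - l * c * γ - c * rx), -β + β * c * rx]

/-- `v₁`: first coordinate of the candidate eigenvector of `M₃`. -/
def v1val (l c rx γ β : ℝ) : ℝ :=
  2 * c * rx / (A3 l c rx γ - B3 c rx * β +
    Real.sqrt ((A3 l c rx γ - B3 c rx * β) ^ 2 + 4 * c * rx * β * (1 - A3 l c rx γ)))

/-!
`M₃` has trace `-(A₃ + B₃β)` and determinant `ℓcγβ`, so `λ₃` is a root of its characteristic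
polynomial, and the first row forces the eigenvector `(v, 1)` to have `v = c r_x / (λ₃ + A₃)`.
The identity `(A₃ + B₃β)² - 4ℓcβγ = (A₃ - B₃β)² + 4c r_x β (1 - A₃)` turns `2 (λ₃ + A₃)` into
the denominator of `v₁`, which is positive because `A₃ < 1`. Since `A₃ > 0`, `v₁` is
differentiable in `β` at `0`, with `v₁(0) = c r_x / A₃ = r_x / (r_x + γℓ)`; this gives the
`O(β)` bound.
-/

open Matrix

theorem Matrix.mulVec_fin_two_eq_smul {K : Type*} [Field K] {a b c d μ v : K}
    (hμ : μ ≠ a) (hv : (μ - a) * v = b) (hchar : (μ - a) * (μ - d) = b * c) :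
    !![a, b; c, d] *ᵥ ![v, 1] = μ • ![v, 1] := by
  have hμa : μ - a ≠ 0 := sub_ne_zero.mpr hμ
  rw [mulVec_fin_two, smul_vec2]
  refine vec2_eq ?_ ?_ <;> simp only [of_apply, cons_val_zero, cons_val_one, smul_eq_mul]
  · linear_combination -hv
  · apply mul_left_cancel₀ hμa
    linear_combination c * hv - hchar

theorem add_sqrt_sq_add_pos {x q : ℝ} (hq : 0 < q) : 0 < x + √(x ^ 2 + q) := by
  have : |x| < √(x ^ 2 + q) := by
    rw [← Real.sqrt_sq_eq_abs]
    exact Real.sqrt_lt_sqrt (sq_nonneg x) (by linarith)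
  linarith [neg_abs_le x]

section

variable (l c rx γ β : ℝ)

theorem M3_eq : M3 l c rx γ β =
    !![-A3 l c rx γ, c * rx; β * (1 - A3 l c rx γ), -(B3 c rx * β)] := by
  rw [M3, A3, B3]
  congr 1
  ring_nf

theorem lam3_discr_eq : (A3 l c rx γ + B3 c rx * β) ^ 2 - 4 * l * c * β * γ =
    (A3 l c rx γ - B3 c rx * β) ^ 2 + 4 * c * rx * β * (1 - A3 l c rx γ) := by
  rw [A3, B3]; ring

theorem two_mul_lam3_add_A3 : 2 * (lam3 l c rx γ β + A3 l c rx γ) =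
    A3 l c rx γ - B3 c rx * β +
      √((A3 l c rx γ - B3 c rx * β) ^ 2 + 4 * c * rx * β * (1 - A3 l c rx γ)) := by
  rw [lam3, lam3_discr_eq]; ring

theorem v1val_eq_div : v1val l c rx γ β = c * rx / (lam3 l c rx γ β + A3 l c rx γ) := by
  rw [v1val, ← two_mul_lam3_add_A3, mul_assoc, mul_div_mul_left _ _ two_ne_zero]

theorem lam3_quadratic_eq_zero (h : 0 ≤ (A3 l c rx γ + B3 c rx * β) ^ 2 - 4 * l * c * β * γ) :
    lam3 l c rx γ β ^ 2 + (A3 l c rx γ + B3 c rx * β) * lam3 l c rx γ β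
      + l * c * β * γ = 0 := by
  rw [lam3]
  linear_combination (1 / 4 : ℝ) * Real.sq_sqrt h

end

theorem lam3_add_A3_pos {l c rx γ β : ℝ} (hc : 0 < c) (hrx : 0 < rx) (hβ : 0 < β)
    (hA3 : A3 l c rx γ < 1) : 0 < lam3 l c rx γ β + A3 l c rx γ := by
  have h1A : 0 < 1 - A3 l c rx γ := by linarith
  have := add_sqrt_sq_add_pos (x := A3 l c rx γ - B3 c rx * β) (by positivity :
    0 < 4 * c * rx * β * (1 - A3 l c rx γ))
  rw [← two_mul_lam3_add_A3] at this
  linarith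

theorem M3_mulVec_eq_lam3_smul {l c rx γ β : ℝ} (hc : 0 < c) (hrx : 0 < rx) (hβ : 0 < β)
    (hA3 : A3 l c rx γ < 1)
    (hdiscr : 0 ≤ (A3 l c rx γ + B3 c rx * β) ^ 2 - 4 * l * c * β * γ) :
    M3 l c rx γ β *ᵥ ![v1val l c rx γ β, 1] = lam3 l c rx γ β • ![v1val l c rx γ β, 1] := by
  have hpos := lam3_add_A3_pos hc hrx hβ hA3
  have hroot := lam3_quadratic_eq_zero l c rx γ β hdiscr
  rw [M3_eq, v1val_eq_div]
  apply mulVec_fin_two_eq_smul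
  · exact ne_of_gt (by linarith)
  · rw [sub_neg_eq_add]
    field_simp
  · simp only [sub_neg_eq_add, A3, B3] at hroot ⊢
    linear_combination hroot

theorem v1val_zero {l c rx γ : ℝ} (hA : 0 < A3 l c rx γ) :
    v1val l c rx γ 0 = rx / (rx + γ * l) := by
  have hA' : A3 l c rx γ = c * (rx + γ * l) := by rw [A3]; ring
  have hc : c ≠ 0 := left_ne_zero_of_mul (hA' ▸ hA.ne')
  have hlγ : rx + γ * l ≠ 0 := right_ne_zero_of_mul (hA' ▸ hA.ne')
  simp only [v1val, mul_zero, zero_mul, add_zero, sub_zero]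
  rw [Real.sqrt_sq hA.le, hA']
  field_simp
  ring

theorem differentiableAt_v1val_zero {l c rx γ : ℝ} (hA : 0 < A3 l c rx γ) :
    DifferentiableAt ℝ (v1val l c rx γ) 0 := by
  have hsqrt : DifferentiableAt ℝ (fun β ↦ √((A3 l c rx γ - B3 c rx * β) ^ 2 +
      4 * c * rx * β * (1 - A3 l c rx γ))) 0 :=
    .sqrt (by fun_prop) (by simp only [mul_zero, zero_mul, sub_zero, add_zero]; positivity)
  exact .div (by fun_prop) ((by fun_prop : DifferentiableAt ℝ _ _).add hsqrt)
    (by simp only [mul_zero, zero_mul, sub_zero, add_zero]; positivity)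

theorem DifferentiableAt.exists_norm_sub_le {𝕜 E F : Type*} [NontriviallyNormedField 𝕜]
    [NormedAddCommGroup E] [NormedSpace 𝕜 E] [NormedAddCommGroup F] [NormedSpace 𝕜 F]
    {f : E → F} {x : E} (hf : DifferentiableAt 𝕜 f x) :
    ∃ K : ℝ, 0 < K ∧ ∃ δ : ℝ, 0 < δ ∧ ∀ y ∈ Metric.closedBall x δ,
      ‖f y - f x‖ ≤ K * ‖y - x‖ := by
  obtain ⟨K, hK, hbound⟩ := hf.isBigO_sub.exists_pos
  obtain ⟨δ, hδ, hball⟩ := Metric.nhds_basis_closedBall.eventually_iff.mp hbound.bound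
  exact ⟨K, hK, δ, hδ, hball⟩

theorem eigenvector_of_M3_general
    (l c rx γ : ℝ)
    (hl : 0 < l) (hc : 0 < c) (hrx : 0 < rx)
    (hγ : γ ∈ Set.Ioo (0 : ℝ) 1) (hA3 : l * c * γ + c * rx < 1) :
    (∀ β : ℝ, 0 < β →
      (A3 l c rx γ + B3 c rx * β) ^ 2 ≥ 4 * l * c * β * γ →
      (M3 l c rx γ β).mulVec ![v1val l c rx γ β, 1] =
        lam3 l c rx γ β • ![v1val l c rx γ β, 1]) ∧
    ∃ K : ℝ, 0 < K ∧ ∃ β0 : ℝ, 0 < β0 ∧ ∀ β ∈ Set.Ioc (0 : ℝ) β0,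
      |v1val l c rx γ β - rx / (rx + γ * l)| ≤ K * β := by
  refine ⟨fun β hβ hdiscr ↦ M3_mulVec_eq_lam3_smul hc hrx hβ hA3 (sub_nonneg.mpr hdiscr), ?_⟩
  have hA : 0 < A3 l c rx γ := by
    obtain ⟨hγ0, -⟩ := hγ
    rw [A3]
    positivity
  obtain ⟨K, hK, β0, hβ0, hbound⟩ := (differentiableAt_v1val_zero hA).exists_norm_sub_le
  refine ⟨K, hK, β0, hβ0, fun β ⟨hβ, hββ0⟩ ↦ ?_⟩
  have hβball : β ∈ Metric.closedBall 0 β0 := by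
    rw [mem_closedBall_zero_iff, Real.norm_of_nonneg hβ.le]
    exact hββ0
  simpa [v1val_zero hA, abs_of_pos hβ] using hbound β hβball

/-- `(v₁, 1)ᵀ` is an eigenvector of `M₃` for the eigenvalue `λ₃`, and
`v₁ = r_x/(r_x + γℓ) + O(β)` as `β → 0`. -/
theorem eigenvector_of_M3
    (l c rx γ : ℝ)
    (hl : 0 < l) (hc : 0 < c) (hrx : 0 < rx)
    (hγ : γ ∈ Set.Ioo (0 : ℝ) 1) (hcrx : c * rx < 1) (hA3 : l * c * γ + c * rx < 1) :
    (∀ β : ℝ, 0 < β →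
      (A3 l c rx γ + B3 c rx * β) ^ 2 ≥ 4 * l * c * β * γ →
      (M3 l c rx γ β).mulVec ![v1val l c rx γ β, 1] =
        lam3 l c rx γ β • ![v1val l c rx γ β, 1]) ∧
    ∃ K : ℝ, 0 < K ∧ ∃ β0 : ℝ, 0 < β0 ∧ ∀ β ∈ Set.Ioc (0 : ℝ) β0,
      |v1val l c rx γ β - rx / (rx + γ * l)| ≤ K * β :=
  eigenvector_of_M3_general l c rx γ hl hc hrx hγ hA3
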